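/- arXiv:1709.09100 — 8 statements merged into one kernel-verified Lean document; each statement's English description precedes it below -/
import Mathlib

section
/- If a connected component of a finite simple graph has at least three vertices and is not complete, then every vertex of that component belongs to some induced P3 of the graph. -/
open SimpleGraph

/-- A cluster graph: every connected component is a complete graph. -/
def IsClusterGraph {V : Type*} (G : SimpleGraph V) : Prop :=
  ∀ u v : V, G.Reachable u v → u ≠ v → G.Adj u v

/-- An induced P3 on the ordered triple (u, v, w). -/
def InducedP3 {V : Type*} (G : SimpleGraph V) (u v w : V) : Prop :=
  u ≠ v ∧ v ≠ w ∧ u ≠ w ∧ G.Adj u v ∧ G.Adj v w ∧ ¬ G.Adj u w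

/-- The (unordered) triple {u, v, w} induces a P3: exactly two of the three pairs are edges. -/
def TripleP3 {V : Type*} (G : SimpleGraph V) (u v w : V) : Prop :=
  u ≠ v ∧ v ≠ w ∧ u ≠ w ∧
    ((G.Adj u v ∧ G.Adj v w ∧ ¬ G.Adj u w) ∨
     (G.Adj u v ∧ G.Adj u w ∧ ¬ G.Adj v w) ∨
     (G.Adj u w ∧ G.Adj v w ∧ ¬ G.Adj u v))

/-- The graph obtained from `G` by toggling the vertex pairs in `M`. -/
def editGraph {V : Type*} (G : SimpleGraph V) (M : Set (Sym2 V)) : SimpleGraph V :=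
  SimpleGraph.fromEdgeSet (symmDiff G.edgeSet M)

/-- `M` is a cluster editing set for `G`. -/
def IsClusterEditingSet {V : Type*} (G : SimpleGraph V) (M : Set (Sym2 V)) : Prop :=
  (∀ e ∈ M, ¬ e.IsDiag) ∧ IsClusterGraph (editGraph G M)

lemma P3_start {V : Type*} (G : SimpleGraph V) {x y : V}
    (hr : G.Reachable x y) (hne : x ≠ y) (hna : ¬ G.Adj x y) :
    ∃ a b, InducedP3 G x a b := by
  obtain ⟨w, hw⟩ := hr.exists_walk_length_eq_dist
  match w, hw with
  | .nil, hw => exact absurd rfl hne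
  | .cons h .nil, hw => exact absurd h hna
  | .cons (v := a) h (.cons (v := b) h' p), hw =>
    refine ⟨a, b, h.ne, h'.ne, ?_, h, h', ?_⟩
    · rintro rfl
      have hd := SimpleGraph.dist_le p
      simp [SimpleGraph.Walk.length_cons] at hw
      omega
    · intro hadj
      have hd := SimpleGraph.dist_le (SimpleGraph.Walk.cons hadj p)
      simp [SimpleGraph.Walk.length_cons] at hw hd
      omega

theorem vertex_of_incomplete_component_in_P3 {V : Type*} [Fintype V] (G : SimpleGraph V)
    (v : V) (h3 : 3 ≤ Set.ncard {w | G.Reachable v w})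
    (hnc : ∃ a b : V, G.Reachable v a ∧ G.Reachable v b ∧ a ≠ b ∧ ¬ G.Adj a b) :
    ∀ x : V, G.Reachable v x →
      ∃ a b c : V, InducedP3 G a b c ∧ (x = a ∨ x = b ∨ x = c) := by
  intro x hvx
  by_cases hx : ∃ y, G.Reachable x y ∧ x ≠ y ∧ ¬ G.Adj x y
  · obtain ⟨y, hr, hne, hna⟩ := hx
    obtain ⟨a, b, hP⟩ := P3_start G hr hne hna
    exact ⟨x, a, b, hP, Or.inl rfl⟩
  · push_neg at hx
    obtain ⟨a, b, hva, hvb, hab, hnadj⟩ := hnc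
    have hxa : G.Reachable x a := hvx.symm.trans hva
    have hxb : G.Reachable x b := hvx.symm.trans hvb
    have hxna : x ≠ a := by rintro rfl; exact hnadj (hx b hxb hab)
    have hxnb : x ≠ b := by rintro rfl; exact hnadj ((hx a hxa (Ne.symm hab)).symm)
    exact ⟨a, x, b, ⟨Ne.symm hxna, hxnb, hab, (hx a hxa hxna).symm, hx b hxb hxnb, hnadj⟩,
      Or.inr (Or.inl rfl)⟩
end

section
/- Let G be a finite simple graph, k a nonnegative integer, and M a set of at most k unordered vertex pairs such that the graph G' with edge set E(G) ⊕ M is a cluster graph. If A is a set of vertices of G of size at least k + 2 that induces a complete subgraph in G, then A induces a complete subgraph in G'. -/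
open SimpleGraph

lemma edit_adj_iff {V : Type*} (G : SimpleGraph V) (M : Set (Sym2 V)) {u v : V} (h : u ≠ v) :
    (editGraph G M).Adj u v ↔ ((G.Adj u v ∧ s(u,v) ∉ M) ∨ (s(u,v) ∈ M ∧ ¬ G.Adj u v)) := by
  simp [editGraph, SimpleGraph.fromEdgeSet_adj, Set.mem_symmDiff, h, SimpleGraph.mem_edgeSet]

theorem big_clique_stays_clique {V : Type*} [Fintype V] (G : SimpleGraph V) (k : ℕ)
    (M : Finset (Sym2 V)) (hM : IsClusterEditingSet G ↑M) (hcard : M.card ≤ k)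
    (A : Finset V) (hA : k + 2 ≤ A.card)
    (hcomp : ∀ u ∈ A, ∀ v ∈ A, u ≠ v → G.Adj u v) :
    ∀ u ∈ A, ∀ v ∈ A, u ≠ v → (editGraph G ↑M).Adj u v := by
  by_contra hcon
  push_neg at hcon
  obtain ⟨u, hu, v, hv, huv, hnadj⟩ := hcon
  set G' := editGraph G (↑M : Set (Sym2 V)) with hG'
  have hGuv := hcomp u hu v hv huv
  have hUV : s(u,v) ∈ M := by
    by_contra h
    exact hnadj ((edit_adj_iff G ↑M huv).2 (Or.inl ⟨hGuv, by exact_mod_cast h⟩))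
  classical
  have hnr : ¬ G'.Reachable u v := fun hr => hnadj (hM.2 u v hr huv)
  -- for each w ∈ A \ {u,v}, one of s(u,w), s(v,w) is in M
  have key : ∀ w ∈ (A.erase u).erase v, s(u,w) ∈ M ∨ s(v,w) ∈ M := by
    intro w hw
    have hwv : w ≠ v := Finset.ne_of_mem_erase hw
    have hwu : w ≠ u := Finset.ne_of_mem_erase (Finset.mem_of_mem_erase hw)
    have hwA : w ∈ A := Finset.mem_of_mem_erase (Finset.mem_of_mem_erase hw)
    by_contra h
    push_neg at h
    have h1 : G'.Adj u w := (edit_adj_iff G ↑M hwu.symm).2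
      (Or.inl ⟨hcomp u hu w hwA hwu.symm, by exact_mod_cast h.1⟩)
    have h2 : G'.Adj w v := by
      have : s(v,w) = s(w,v) := Sym2.eq_swap
      exact ((edit_adj_iff G ↑M hwv).2
        (Or.inl ⟨hcomp w hwA v hv hwv, by rw [← this]; exact_mod_cast h.2⟩))
    exact hnr (h1.toWalk.append h2.toWalk).reachable
  set f : V → Sym2 V := fun w => if s(u,w) ∈ M then s(u,w) else s(v,w) with hf
  have hmaps : ∀ w ∈ (A.erase u).erase v, f w ∈ M.erase s(u,v) := by
    intro w hw
    have hwv : w ≠ v := Finset.ne_of_mem_erase hw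
    have hwu : w ≠ u := Finset.ne_of_mem_erase (Finset.mem_of_mem_erase hw)
    simp only [hf]
    split_ifs with h
    · refine Finset.mem_erase.2 ⟨?_, h⟩
      intro hEq
      rcases Sym2.eq_iff.1 hEq with ⟨_, h2⟩ | ⟨h1, _⟩
      · exact hwv h2
      · exact huv h1
    · have hm : s(v,w) ∈ M := (key w hw).resolve_left h
      refine Finset.mem_erase.2 ⟨?_, hm⟩
      intro hEq
      rcases Sym2.eq_iff.1 hEq with ⟨h1, _⟩ | ⟨_, h2⟩
      · exact huv h1.symm
      · exact hwu h2
  have hinj : ∀ w₁ ∈ (A.erase u).erase v, ∀ w₂ ∈ (A.erase u).erase v, f w₁ = f w₂ → w₁ = w₂ := by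
    intro w₁ h₁ w₂ h₂ hEq
    have h1v : w₁ ≠ v := Finset.ne_of_mem_erase h₁
    have h1u : w₁ ≠ u := Finset.ne_of_mem_erase (Finset.mem_of_mem_erase h₁)
    have h2v : w₂ ≠ v := Finset.ne_of_mem_erase h₂
    have h2u : w₂ ≠ u := Finset.ne_of_mem_erase (Finset.mem_of_mem_erase h₂)
    simp only [hf] at hEq
    split_ifs at hEq with ha hb hb
    · rcases Sym2.eq_iff.1 hEq with ⟨_, h⟩ | ⟨h, h'⟩
      · exact h
      · exact absurd h.symm h2u
    · rcases Sym2.eq_iff.1 hEq with ⟨h, _⟩ | ⟨h, h'⟩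
      · exact absurd h huv
      · exact absurd h' h1v
    · rcases Sym2.eq_iff.1 hEq with ⟨h, _⟩ | ⟨h, h'⟩
      · exact absurd h.symm huv
      · exact absurd h' h1u
    · rcases Sym2.eq_iff.1 hEq with ⟨_, h⟩ | ⟨h, h'⟩
      · exact h
      · exact absurd h.symm h2v
  have hle := Finset.card_le_card_of_injOn f hmaps hinj
  have e1 : ((A.erase u).erase v).card = A.card - 2 := by
    rw [Finset.card_erase_of_mem (Finset.mem_erase.2 ⟨huv.symm, hv⟩),
        Finset.card_erase_of_mem hu]
    omega
  have e2 : (M.erase s(u,v)).card = M.card - 1 := Finset.card_erase_of_mem hUV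
  have hM1 : 1 ≤ M.card := Finset.card_pos.2 ⟨_, hUV⟩
  omega
end

section
/- Let G be a finite simple graph, k a nonnegative integer, and suppose {u,v} is an edge of G for which there exist at least k+1 distinct vertices w (distinct from u and v) such that {u,v,w} induces a P3 in G. Then every cluster editing set M for G with |M| ≤ k contains the pair {u,v}. -/
open SimpleGraph

lemma edit_adj_of_not_mem {V : Type*} (G : SimpleGraph V) (M : Set (Sym2 V))
    {a b : V} (hab : a ≠ b) (h : s(a,b) ∉ M) :
    (editGraph G M).Adj a b ↔ G.Adj a b := by
  simp only [editGraph, SimpleGraph.fromEdgeSet_adj, Set.mem_symmDiff,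
    SimpleGraph.mem_edgeSet, hab, and_true, ne_eq, not_false_eq_true]
  constructor
  · rintro (⟨h1, _⟩ | ⟨h1, _⟩)
    · exact h1
    · exact absurd h1 h
  · intro h1
    exact Or.inl ⟨h1, h⟩
theorem heavy_edge_must_be_edited {V : Type*} [Fintype V] (G : SimpleGraph V) (k : ℕ)
    (u v : V) (huv : G.Adj u v)
    (hmany : k + 1 ≤ Set.ncard {w | w ≠ u ∧ w ≠ v ∧ TripleP3 G u v w}) :
    ∀ M : Finset (Sym2 V), IsClusterEditingSet G ↑M → M.card ≤ k → s(u, v) ∈ M := by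
  intro M hM hk
  by_contra huvM
  set S : Set V := {w | w ≠ u ∧ w ≠ v ∧ TripleP3 G u v w} with hS
  have huvne : u ≠ v := huv.ne
  have huv' : (editGraph G ↑M).Adj u v := by
    rw [edit_adj_of_not_mem G ↑M huvne (by exact_mod_cast huvM)]
    exact huv
  -- Key claim: each w in S forces an edited pair
  have key : ∀ w ∈ S, s(u,w) ∈ M ∨ s(v,w) ∈ M := by
    intro w hw
    obtain ⟨hwu, hwv, _, _, _, htri⟩ := hw
    by_contra hcon
    push_neg at hcon
    obtain ⟨h1, h2⟩ := hcon
    have e1 : (editGraph G ↑M).Adj u w ↔ G.Adj u w :=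
      edit_adj_of_not_mem G ↑M hwu.symm (by exact_mod_cast h1)
    have e2 : (editGraph G ↑M).Adj v w ↔ G.Adj v w :=
      edit_adj_of_not_mem G ↑M hwv.symm (by exact_mod_cast h2)
    rcases htri with ⟨_, hvw, hun⟩ | ⟨_, huw, hvn⟩ | ⟨_, _, hn⟩
    · have : (editGraph G ↑M).Adj u w :=
        hM.2 u w (huv'.reachable.trans (e2.mpr hvw).reachable) hwu.symm
      exact hun (e1.mp this)
    · have : (editGraph G ↑M).Adj v w :=
        hM.2 v w (huv'.symm.reachable.trans (e1.mpr huw).reachable) hwv.symm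
      exact hvn (e2.mp this)
    · exact hn huv
  -- map each w to an element of M
  classical
  set f : V → Sym2 V := fun w => if s(u,w) ∈ M then s(u,w) else s(v,w) with hf
  have hmaps : ∀ w ∈ S, f w ∈ (M : Set (Sym2 V)) := by
    intro w hw
    simp only [hf]
    split
    · assumption
    · rcases key w hw with h | h
      · tauto
      · exact h
  have hinj : Set.InjOn f S := by
    intro a ha b hb hab
    have hau : a ≠ u := ha.1
    have hav : a ≠ v := ha.2.1
    have hbu : b ≠ u := hb.1
    have hbv : b ≠ v := hb.2.1
    simp only [hf] at hab
    split at hab <;> split at hab <;>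
      rcases Sym2.eq_iff.mp hab with ⟨h1, h2⟩ | ⟨h1, h2⟩ <;>
        first
          | exact h2
          | exact absurd h1.symm hau
          | exact absurd h1.symm hbu
          | exact absurd h1.symm hav
          | exact absurd h1.symm hbv
          | exact absurd h2 hav
          | exact absurd h2 hau
          | exact absurd h1 huvne
          | exact absurd h1.symm huvne
  have hle : S.ncard ≤ M.card := by
    calc S.ncard = (f '' S).ncard := (Set.ncard_image_of_injOn hinj).symm
    _ ≤ (M : Set (Sym2 V)).ncard := Set.ncard_le_ncard (Set.image_subset_iff.mpr hmaps)
        (M : Set (Sym2 V)).toFinite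
    _ = M.card := Set.ncard_coe_finset M
  omega
end

section
/- Let G be a finite simple graph, k a nonnegative integer, and suppose {u,v} is a non-edge of G for which there exist at least k+1 distinct vertices w (distinct from u and v) such that {u,v,w} induces a P3 in G (with w adjacent to both u and v). Then every cluster editing set M for G with |M| ≤ k contains the pair {u,v}. -/
open SimpleGraph

theorem heavy_nonedge_must_be_edited {V : Type*} [Fintype V] (G : SimpleGraph V) (k : ℕ)
    (u v : V) (hne : u ≠ v) (huv : ¬ G.Adj u v)
    (hmany : k + 1 ≤ Set.ncard {w | w ≠ u ∧ w ≠ v ∧ G.Adj u w ∧ G.Adj v w ∧ TripleP3 G u v w}) :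
    ∀ M : Finset (Sym2 V), IsClusterEditingSet G ↑M → M.card ≤ k → s(u, v) ∈ M := by
  intro M hM hcard
  by_contra hnot
  set S := {w | w ≠ u ∧ w ≠ v ∧ G.Adj u w ∧ G.Adj v w ∧ TripleP3 G u v w} with hS
  -- for each w in S, one of s(u,w), s(v,w) is in M
  have key : ∀ w ∈ S, s(u, w) ∈ M ∨ s(v, w) ∈ M := by
    intro w hw
    obtain ⟨hwu, hwv, hadjuw, hadjvw, _⟩ := hw
    by_contra hcon
    push_neg at hcon
    obtain ⟨h1, h2⟩ := hcon
    have adj1 : (editGraph G ↑M).Adj u w := by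
      rw [editGraph, SimpleGraph.fromEdgeSet_adj]
      exact ⟨Or.inl ⟨hadjuw, h1⟩, Ne.symm hwu⟩
    have adj2 : (editGraph G ↑M).Adj w v := by
      rw [editGraph, SimpleGraph.fromEdgeSet_adj]
      refine ⟨Or.inl ⟨hadjvw.symm, ?_⟩, hwv⟩
      rw [Sym2.eq_swap]; exact h2
    have hreach : (editGraph G ↑M).Reachable u v := (adj1.reachable).trans adj2.reachable
    have hadj := hM.2 u v hreach hne
    rw [editGraph, SimpleGraph.fromEdgeSet_adj] at hadj
    rcases hadj.1 with ⟨he, _⟩ | ⟨hm, _⟩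
    · exact huv he
    · exact hnot hm
  classical
  set f : V → Sym2 V := fun w => if s(u, w) ∈ M then s(u, w) else s(v, w) with hf
  have hmaps : ∀ w ∈ S, f w ∈ (↑M : Set (Sym2 V)) := by
    intro w hw
    simp only [hf]
    split
    · assumption
    · next h => exact (key w hw).resolve_left h
  have hinj : Set.InjOn f S := by
    intro a ha b hb hab
    simp only [hf] at hab
    have hav : a ≠ v := ha.2.1
    have hbv : b ≠ v := hb.2.1
    split at hab <;> split at hab <;>
      rcases Sym2.eq_iff.mp hab with ⟨h1, h2⟩ | ⟨h1, h2⟩ <;>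
      first
        | exact h2
        | exact absurd h1 hne
        | exact absurd h1 hne.symm
        | exact absurd h2 hav
        | exact absurd h1.symm hbv
        | exact absurd h2 ha.1
  have h1 : S.ncard = (f '' S).ncard := (Set.ncard_image_of_injOn hinj).symm
  have h2 : (f '' S).ncard ≤ (↑M : Set (Sym2 V)).ncard := by
    apply Set.ncard_le_ncard _ M.finite_toSet
    rintro x ⟨w, hw, rfl⟩
    exact hmaps w hw
  rw [Set.ncard_coe_finset] at h2
  omega
end

section
/- Let G be a finite simple graph and k a nonnegative integer such that: (a) G has a cluster editing set M with |M| ≤ k, and (b) for every unordered pair {u,v} of vertices, there are at most k vertices w such that {u,v,w} induces a P3 in G. Then the number of vertices of G that appear in some induced P3 of G is at most k² + 2k. -/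
open SimpleGraph

lemma tripleP3_swap {V : Type*} (G : SimpleGraph V) {u v w : V} :
    TripleP3 G u v w → TripleP3 G v u w := by
  rintro ⟨h1, h2, h3, (⟨a1, a2, a3⟩ | ⟨a1, a2, a3⟩ | ⟨a1, a2, a3⟩)⟩
  · exact ⟨h1.symm, h3, h2, Or.inr (Or.inl ⟨a1.symm, a2, fun h => a3 h⟩)⟩
  · exact ⟨h1.symm, h3, h2, Or.inl ⟨a1.symm, a2, a3⟩⟩
  · exact ⟨h1.symm, h3, h2, Or.inr (Or.inr ⟨a2, a1, fun h => a3 h.symm⟩)⟩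

theorem P3_vertex_count_bound {V : Type*} [Fintype V] (G : SimpleGraph V) (k : ℕ)
    (h1 : ∃ M : Finset (Sym2 V), IsClusterEditingSet G ↑M ∧ M.card ≤ k)
    (h2 : ∀ u v : V, u ≠ v → Set.ncard {w | TripleP3 G u v w} ≤ k) :
    Set.ncard {x : V | ∃ a b c : V, InducedP3 G a b c ∧ (x = a ∨ x = b ∨ x = c)}
      ≤ k ^ 2 + 2 * k := by
  classical
  obtain ⟨M, ⟨hMdiag, hMcluster⟩, hMcard⟩ := h1
  have adj_iff : ∀ u v : V, s(u,v) ∉ (M : Set (Sym2 V)) →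
      ((editGraph G ↑M).Adj u v ↔ G.Adj u v) := by
    intro u v hm
    simp only [editGraph, fromEdgeSet_adj, Set.mem_symmDiff, mem_edgeSet]
    constructor
    · rintro ⟨(⟨h, _⟩ | ⟨h, _⟩), _⟩
      · exact h
      · exact absurd h hm
    · intro h
      exact ⟨Or.inl ⟨h, hm⟩, h.ne⟩
  have key : ∀ a b c : V, InducedP3 G a b c →
      s(a,b) ∈ M ∨ s(b,c) ∈ M ∨ s(a,c) ∈ M := by
    intro a b c ⟨hab, hbc, hac, e1, e2, e3⟩
    by_contra h
    push_neg at h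
    obtain ⟨m1, m2, m3⟩ := h
    have H1 : (editGraph G ↑M).Adj a b := (adj_iff a b (by exact_mod_cast m1)).mpr e1
    have H2 : (editGraph G ↑M).Adj b c := (adj_iff b c (by exact_mod_cast m2)).mpr e2
    have H3 : ¬ (editGraph G ↑M).Adj a c :=
      fun h => e3 ((adj_iff a c (by exact_mod_cast m3)).mp h)
    exact H3 (hMcluster a c (H1.reachable.trans H2.reachable) hac)
  set f : Sym2 V → Finset V := fun e =>
    Finset.univ.filter (fun w => w ∈ e ∨ ∃ u v, e = s(u,v) ∧ TripleP3 G u v w) with hf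
  have cover : (Finset.univ.filter
      (fun x => ∃ a b c : V, InducedP3 G a b c ∧ (x = a ∨ x = b ∨ x = c)))
      ⊆ M.biUnion f := by
    intro x hx
    simp only [Finset.mem_filter, Finset.mem_univ, true_and] at hx
    obtain ⟨a, b, c, hp3, hx⟩ := hx
    obtain ⟨hab, hbc, hac, e1, e2, e3⟩ := hp3
    rw [Finset.mem_biUnion]
    rcases key a b c ⟨hab, hbc, hac, e1, e2, e3⟩ with hm | hm | hm
    · refine ⟨s(a,b), hm, ?_⟩
      simp only [hf, Finset.mem_filter, Finset.mem_univ, true_and]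
      rcases hx with rfl | rfl | rfl
      · exact Or.inl (by simp)
      · exact Or.inl (by simp)
      · exact Or.inr ⟨a, b, rfl, hab, hbc, hac, Or.inl ⟨e1, e2, e3⟩⟩
    · refine ⟨s(b,c), hm, ?_⟩
      simp only [hf, Finset.mem_filter, Finset.mem_univ, true_and]
      rcases hx with rfl | rfl | rfl
      · exact Or.inr ⟨b, c, rfl, hbc, hac.symm, hab.symm,
          Or.inr (Or.inl ⟨e2, e1.symm, fun h => e3 h.symm⟩)⟩
      · exact Or.inl (by simp)
      · exact Or.inl (by simp)
    · refine ⟨s(a,c), hm, ?_⟩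
      simp only [hf, Finset.mem_filter, Finset.mem_univ, true_and]
      rcases hx with rfl | rfl | rfl
      · exact Or.inl (by simp)
      · exact Or.inr ⟨a, c, rfl, hac, hbc.symm, hab,
          Or.inr (Or.inr ⟨e1, e2.symm, e3⟩)⟩
      · exact Or.inl (by simp)
  have hcard : ∀ e ∈ M, (f e).card ≤ k + 2 := by
    intro e he
    obtain ⟨u, v, rfl⟩ :=
      Sym2.ind (f := fun e => ∃ u v, e = s(u,v)) (fun u v => ⟨u, v, rfl⟩) e
    have huv : u ≠ v := by
      intro h
      exact hMdiag _ (by exact_mod_cast he) (by simp [Sym2.mk_isDiag_iff, h])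
    have hsub : f s(u,v) ⊆ insert u (insert v
        (Finset.univ.filter (fun w => TripleP3 G u v w))) := by
      intro w hw
      simp only [hf, Finset.mem_filter, Finset.mem_univ, true_and] at hw
      simp only [Finset.mem_insert, Finset.mem_filter, Finset.mem_univ, true_and]
      rcases hw with hw | ⟨u', v', heq, ht⟩
      · rcases Sym2.mem_iff.mp hw with h | h
        · exact Or.inl h
        · exact Or.inr (Or.inl h)
      · rcases Sym2.eq_iff.mp heq with ⟨rfl, rfl⟩ | ⟨rfl, rfl⟩
        · exact Or.inr (Or.inr ht)
        · exact Or.inr (Or.inr (tripleP3_swap G ht))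
    have hfil : (Finset.univ.filter (fun w => TripleP3 G u v w)).card ≤ k := by
      have := h2 u v huv
      rwa [Set.ncard_eq_toFinset_card', Set.toFinset_setOf] at this
    calc (f s(u,v)).card ≤ _ := Finset.card_le_card hsub
      _ ≤ (insert v (Finset.univ.filter (fun w => TripleP3 G u v w))).card + 1 :=
        Finset.card_insert_le _ _
      _ ≤ (Finset.univ.filter (fun w => TripleP3 G u v w)).card + 1 + 1 :=
        Nat.add_le_add_right (Finset.card_insert_le _ _) 1
      _ ≤ k + 2 := by omega
  have hS : Set.ncard {x : V | ∃ a b c : V, InducedP3 G a b c ∧ (x = a ∨ x = b ∨ x = c)}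
      = (Finset.univ.filter
        (fun x => ∃ a b c : V, InducedP3 G a b c ∧ (x = a ∨ x = b ∨ x = c))).card := by
    rw [Set.ncard_eq_toFinset_card', Set.toFinset_setOf]
  rw [hS]
  calc _ ≤ (M.biUnion f).card := Finset.card_le_card cover
    _ ≤ ∑ e ∈ M, (f e).card := Finset.card_biUnion_le
    _ ≤ ∑ _e ∈ M, (k + 2) := Finset.sum_le_sum hcard
    _ = M.card * (k + 2) := by rw [Finset.sum_const, smul_eq_mul]
    _ ≤ k * (k + 2) := Nat.mul_le_mul_right _ hMcard
    _ = k ^ 2 + 2 * k := by ring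
end

section
/- Let G be a finite simple graph and A the vertex set of a connected component of G that induces a complete subgraph. Then for every nonnegative integer k, G has a cluster editing set of size at most k if and only if the induced subgraph G − A (on the remaining vertices) has a cluster editing set of size at most k. -/
open SimpleGraph

lemma editGraph_adj {V : Type*} (G : SimpleGraph V) (M : Set (Sym2 V)) (u v : V) :
    (editGraph G M).Adj u v ↔ (s(u,v) ∈ symmDiff G.edgeSet M) ∧ u ≠ v := by
  simp [editGraph, fromEdgeSet_adj]

lemma editInduce {V : Type*} (G : SimpleGraph V) (S : Set V) (M : Set (Sym2 V))
    (M' : Set (Sym2 ↥S)) (h : ∀ e : Sym2 ↥S, e ∈ M' ↔ e.map Subtype.val ∈ M) :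
    editGraph (G.induce S) M' = (editGraph G M).induce S := by
  ext a b
  have hmap : (s(a,b) : Sym2 ↥S).map Subtype.val = s((a:V), (b:V)) := rfl
  have he : s(a,b) ∈ (G.induce S).edgeSet ↔ s((a:V),(b:V)) ∈ G.edgeSet := Iff.rfl
  have hne : a ≠ b ↔ (a:V) ≠ (b:V) := Subtype.coe_injective.ne_iff.symm
  simp only [comap_adj, editGraph_adj, Set.mem_symmDiff, h s(a,b), hmap, he, hne,
    Function.Embedding.coe_subtype]

lemma walkInduce {V : Type*} (H : SimpleGraph V) (S : Set V)
    (hS : ∀ x y, H.Adj x y → x ∈ S → y ∈ S) {u v : V} (p : H.Walk u v) (hu : u ∈ S) :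
    ∃ hv : v ∈ S, (H.induce S).Reachable ⟨u,hu⟩ ⟨v,hv⟩ := by
  induction p with
  | nil => exact ⟨hu, Reachable.refl _⟩
  | @cons x y z h p ih =>
    have hy : y ∈ S := hS _ _ h hu
    obtain ⟨hv, hr⟩ := ih hy
    exact ⟨hv, Reachable.trans (Adj.reachable (by exact h : (H.induce S).Adj ⟨x,hu⟩ ⟨y,hy⟩)) hr⟩

theorem remove_complete_component {V : Type*} [Fintype V] (G : SimpleGraph V)
    (A : Set V) (hcomp : ∃ u : V, A = {v | G.Reachable u v})
    (hcl : ∀ u ∈ A, ∀ v ∈ A, u ≠ v → G.Adj u v) (k : ℕ) :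
    (∃ M : Finset (Sym2 V), IsClusterEditingSet G ↑M ∧ M.card ≤ k) ↔
    (∃ M : Finset (Sym2 ↥(Aᶜ : Set V)),
      IsClusterEditingSet (G.induce (Aᶜ : Set V)) ↑M ∧ M.card ≤ k) := by
  classical
  haveI : Fintype ↥(Aᶜ : Set V) := Fintype.ofFinite _
  constructor
  · rintro ⟨M, ⟨hdiag, hclu⟩, hcard⟩
    let M' : Finset (Sym2 ↥(Aᶜ : Set V)) :=
      Finset.univ.filter (fun e => e.map Subtype.val ∈ M)
    have hM' : ∀ e : Sym2 ↥(Aᶜ : Set V),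
        e ∈ (↑M' : Set (Sym2 ↥(Aᶜ : Set V))) ↔ e.map Subtype.val ∈ (↑M : Set (Sym2 V)) := by
      intro e; simp [M']
    have heq := editInduce G Aᶜ ↑M ↑M' hM'
    refine ⟨M', ⟨?_, ?_⟩, ?_⟩
    · intro e he
      have h2 := hdiag _ ((hM' e).1 he)
      exact fun hd => h2 hd.map
    · intro a b hr hab
      rw [heq] at hr
      have hr2 : (editGraph G ↑M).Reachable ↑a ↑b :=
        hr.map (⟨Subtype.val, fun h => h⟩ :
          ((editGraph G ↑M).induce (Aᶜ : Set V)) →g editGraph G ↑M)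
      have := hclu _ _ hr2 (Subtype.coe_injective.ne hab)
      rw [heq]
      exact this
    · refine le_trans ?_ hcard
      apply Finset.card_le_card_of_injOn (Sym2.map Subtype.val)
      · intro e he
        simpa using (Finset.mem_filter.1 he).2
      · exact fun a _ b _ h => Sym2.map.injective Subtype.coe_injective h
  · rintro ⟨M', ⟨hdiag, hclu⟩, hcard⟩
    let M : Finset (Sym2 V) := M'.image (Sym2.map Subtype.val)
    have hM' : ∀ e : Sym2 ↥(Aᶜ : Set V),
        e ∈ (↑M' : Set (Sym2 ↥(Aᶜ : Set V))) ↔ e.map Subtype.val ∈ (↑M : Set (Sym2 V)) := by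
      intro e
      simp only [M, Finset.coe_image, Set.mem_image, Finset.mem_coe]
      constructor
      · exact fun h => ⟨e, h, rfl⟩
      · rintro ⟨e', he', heq2⟩
        rwa [Sym2.map.injective Subtype.coe_injective heq2] at he'
    have heq := editInduce G Aᶜ ↑M ↑M' hM'
    obtain ⟨u₀, hA⟩ := hcomp
    have hnotM : ∀ x y : V, x ∈ A → s(x,y) ∉ (↑M : Set (Sym2 V)) := by
      intro x y hx hmem
      obtain ⟨e', _, heq2⟩ : ∃ e' ∈ M', Sym2.map Subtype.val e' = s(x,y) := by
        simpa [M] using hmem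
      have hxe : x ∈ Sym2.map Subtype.val e' := by
        rw [heq2]; exact Sym2.mem_mk_left x y
      obtain ⟨a, _, ha2⟩ := Sym2.mem_map.1 hxe
      exact (ha2 ▸ a.2) hx
    have hside : ∀ x y, (editGraph G ↑M).Adj x y → (x ∈ A ↔ y ∈ A) := by
      have key : ∀ x y, (editGraph G ↑M).Adj x y → x ∈ A → y ∈ A := by
        intro x y hadj hx
        rcases Set.mem_symmDiff.1 ((editGraph_adj G ↑M x y).1 hadj).1 with ⟨he, _⟩ | ⟨hm, _⟩
        · have hGxy : G.Adj x y := he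
          have : G.Reachable u₀ y := Reachable.trans (by rwa [hA] at hx) hGxy.reachable
          rw [hA]; exact this
        · exact absurd hm (hnotM x y hx)
      exact fun x y h => ⟨key x y h, key y x h.symm⟩
    refine ⟨M, ⟨?_, ?_⟩, le_trans Finset.card_image_le hcard⟩
    · intro e he
      obtain ⟨e', he', rfl⟩ : ∃ e' ∈ M', Sym2.map Subtype.val e' = e := by simpa [M] using he
      exact fun hd => hdiag e' (by exact_mod_cast he')
        ((Sym2.isDiag_map Subtype.coe_injective).1 hd)
    · intro u v hr huv
      have hsame : u ∈ A ↔ v ∈ A := by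
        clear huv
        obtain ⟨p⟩ := hr
        induction p with
        | nil => exact Iff.rfl
        | cons h p ih => exact (hside _ _ h).trans ih
      by_cases hu : u ∈ A
      · have hv : v ∈ A := hsame.1 hu
        exact (editGraph_adj G ↑M u v).2
          ⟨Set.mem_symmDiff.2 (Or.inl ⟨hcl u hu v hv huv, hnotM u v hu⟩), huv⟩
      · obtain ⟨p⟩ := hr
        obtain ⟨hv', hr'⟩ := walkInduce (editGraph G ↑M) (Aᶜ : Set V)
          (fun x y hxy hx hyA => hx ((hside x y hxy).2 hyA)) p hu
        rw [← heq] at hr'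
        have hAdj := hclu _ _ hr' (fun h => huv (congrArg Subtype.val h))
        rw [heq] at hAdj
        exact hAdj
end

section
/- Let G1 and G2 be cluster graphs on the same finite vertex set V, and let D ⊆ V be such that the induced subgraphs G1[V ∖ D] and G2[V ∖ D] are equal. Then there is a function M that assigns to some connected components X of G1 pairwise-distinct connected components M(X) of G2 (i.e., M is injective on its domain) such that the sum over X in the domain of |X ∩ M(X)| is at least |V| − |D|. -/
open SimpleGraph

theorem cluster_agree_gives_matching {V : Type*} [Fintype V] (G1 G2 : SimpleGraph V)
    (h1 : IsClusterGraph G1) (h2 : IsClusterGraph G2) (D : Set V)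
    (hind : G1.induce (Dᶜ : Set V) = G2.induce (Dᶜ : Set V)) :
    ∃ (dom : Finset G1.ConnectedComponent)
      (M : G1.ConnectedComponent → G2.ConnectedComponent),
      Set.InjOn M ↑dom ∧
      Fintype.card V - D.ncard ≤ ∑ X ∈ dom, (X.supp ∩ (M X).supp).ncard := by
  classical
  -- adjacency agreement outside D
  have hadj : ∀ u v : V, u ∉ D → v ∉ D → (G1.Adj u v ↔ G2.Adj u v) := by
    intro u v hu hv
    have := congrArg SimpleGraph.Adj hind
    have h := congrFun (congrFun this ⟨u, hu⟩) ⟨v, hv⟩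
    exact iff_of_eq h
  have hreach : ∀ u v : V, u ∉ D → v ∉ D → (G1.Reachable u v ↔ G2.Reachable u v) := by
    intro u v hu hv
    by_cases huv : u = v
    · subst huv; exact ⟨fun _ => SimpleGraph.Reachable.refl u, fun _ => SimpleGraph.Reachable.refl u⟩
    constructor
    · intro h; exact ((hadj u v hu hv).1 (h1 u v h huv)).reachable
    · intro h; exact ((hadj u v hu hv).2 (h2 u v h huv)).reachable
  let s : Finset V := Dᶜ.toFinset
  let f : V → G1.ConnectedComponent := G1.connectedComponentMk
  let dom : Finset G1.ConnectedComponent := s.image f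
  have hrep : ∀ X ∈ dom, ∃ v, v ∈ s ∧ f v = X := by
    intro X hX
    obtain ⟨v, hv, hfv⟩ := Finset.mem_image.1 hX
    exact ⟨v, hv, hfv⟩
  let rep : G1.ConnectedComponent → V := fun X =>
    if h : ∃ v, v ∈ s ∧ f v = X then h.choose else X.out
  have hrep_mem : ∀ X ∈ dom, rep X ∈ s ∧ f (rep X) = X := by
    intro X hX
    have h := hrep X hX
    simp only [rep, dif_pos h]
    exact h.choose_spec
  let M : G1.ConnectedComponent → G2.ConnectedComponent := fun X =>
    G2.connectedComponentMk (rep X)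
  refine ⟨dom, M, ?_, ?_⟩
  · intro X hX Y hY hMXY
    obtain ⟨hXs, hXf⟩ := hrep_mem X hX
    obtain ⟨hYs, hYf⟩ := hrep_mem Y hY
    have hXD : rep X ∉ D := by simpa [s] using hXs
    have hYD : rep Y ∉ D := by simpa [s] using hYs
    have h2r : G2.Reachable (rep X) (rep Y) :=
      SimpleGraph.ConnectedComponent.exact hMXY
    have h1r : G1.Reachable (rep X) (rep Y) := (hreach _ _ hXD hYD).2 h2r
    rw [← hXf, ← hYf]
    exact SimpleGraph.ConnectedComponent.sound h1r
  · have hcard : s.card = ∑ X ∈ dom, (s.filter (fun v => f v = X)).card :=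
      Finset.card_eq_sum_card_fiberwise (fun x hx => Finset.mem_image_of_mem f hx)
    have hle : ∀ X ∈ dom,
        (s.filter (fun v => f v = X)).card ≤ (X.supp ∩ (M X).supp).ncard := by
      intro X hX
      obtain ⟨hXs, hXf⟩ := hrep_mem X hX
      have hXD : rep X ∉ D := by simpa [s] using hXs
      have hsub : ((s.filter (fun v => f v = X)) : Set V) ⊆ X.supp ∩ (M X).supp := by
        intro v hv
        simp only [Finset.coe_filter, Set.mem_setOf_eq] at hv
        obtain ⟨hvs, hvf⟩ := hv
        have hvD : v ∉ D := by simpa [s] using hvs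
        have h1r : G1.Reachable v (rep X) :=
          SimpleGraph.ConnectedComponent.exact (hvf.trans hXf.symm)
        have h2r : G2.Reachable v (rep X) := (hreach _ _ hvD hXD).1 h1r
        constructor
        · exact hvf
        · exact SimpleGraph.ConnectedComponent.sound h2r
      calc (s.filter (fun v => f v = X)).card
          = ((s.filter (fun v => f v = X)) : Set V).ncard := (Set.ncard_coe_finset _).symm
        _ ≤ (X.supp ∩ (M X).supp).ncard :=
            Set.ncard_le_ncard hsub (Set.toFinite _)
    have h1' : s.card ≤ ∑ X ∈ dom, (X.supp ∩ (M X).supp).ncard := by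
      rw [hcard]; exact Finset.sum_le_sum hle
    have hs : s.card = Dᶜ.ncard := by
      rw [Set.ncard_eq_toFinset_card']
    have hcompl : D.ncard + Dᶜ.ncard = Nat.card V :=
      Set.ncard_add_ncard_compl D (Set.toFinite _) (Set.toFinite _)
    rw [Nat.card_eq_fintype_card] at hcompl
    omega
end

section
/- Let G1 and G2 be cluster graphs on the same finite vertex set V. Suppose there is an injective partial map M from the set of connected components of G1 to the set of connected components of G2 such that Σ_X |X ∩ M(X)| ≥ |V| − d for some nonnegative integer d. Then there exists a set D ⊆ V with |D| ≤ d such that G1[V ∖ D] = G2[V ∖ D]. -/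
open SimpleGraph

/-!
Let `S` be the union of the overlaps `X ∩ M X` over `X ∈ dom`, and take `D = V ∖ S`.
The overlaps lie in distinct components of `G1`, so `|S|` is the given sum and `|D| ≤ d`.
In a cluster graph two distinct vertices are adjacent exactly when they lie in the same
component; for `u ∈ X ∩ M X` and `v ∈ Y ∩ M Y` this reads `X = Y` in `G1` and `M X = M Y`
in `G2`, which are equivalent because `M` is injective on `dom`.
-/

section

variable {V : Type*}

theorem IsClusterGraph.adj_iff {G : SimpleGraph V} (hG : IsClusterGraph G) {u v : V} :
    G.Adj u v ↔ u ≠ v ∧ G.connectedComponentMk u = G.connectedComponentMk v :=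
  ⟨fun h ↦ ⟨h.ne, ConnectedComponent.sound h.reachable⟩,
    fun ⟨hne, h⟩ ↦ hG u v (ConnectedComponent.exact h) hne⟩

theorem SimpleGraph.induce_eq_induce_of_adj_iff {G H : SimpleGraph V} {s : Set V}
    (h : ∀ u ∈ s, ∀ v ∈ s, G.Adj u v ↔ H.Adj u v) : G.induce s = H.induce s := by
  ext ⟨u, hu⟩ ⟨v, hv⟩
  exact h u hu v hv

theorem SimpleGraph.ncard_biUnion_supp_inter [Finite V] {G : SimpleGraph V}
    (s : Finset G.ConnectedComponent) (t : G.ConnectedComponent → Set V) :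
    (⋃ X ∈ s, X.supp ∩ t X).ncard = ∑ X ∈ s, (X.supp ∩ t X).ncard := by
  rw [← finsum_mem_coe_finset]
  refine s.finite_toSet.ncard_biUnion (fun _ _ ↦ Set.toFinite _) fun X _ Y _ hXY ↦ ?_
  exact (G.pairwise_disjoint_supp_connectedComponent hXY).mono
    Set.inter_subset_left Set.inter_subset_left

theorem IsClusterGraph.adj_iff_adj_of_mem_biUnion_supp_inter {G1 G2 : SimpleGraph V}
    (h1 : IsClusterGraph G1) (h2 : IsClusterGraph G2)
    {M : G1.ConnectedComponent → G2.ConnectedComponent} {s : Set G1.ConnectedComponent}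
    (hinj : Set.InjOn M s) {u v : V}
    (hu : u ∈ ⋃ X ∈ s, X.supp ∩ (M X).supp) (hv : v ∈ ⋃ Y ∈ s, Y.supp ∩ (M Y).supp) :
    G1.Adj u v ↔ G2.Adj u v := by
  simp only [Set.mem_iUnion, Set.mem_inter_iff, ConnectedComponent.mem_supp_iff] at hu hv
  obtain ⟨X, hX, rfl, hMu⟩ := hu
  obtain ⟨Y, hY, hXY, hMv⟩ := hv
  rw [h1.adj_iff, h2.adj_iff, hMu, hMv, hXY, hinj.eq_iff hX hY]

end

theorem matching_gives_cluster_agree {V : Type*} [Fintype V] (G1 G2 : SimpleGraph V)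
    (h1 : IsClusterGraph G1) (h2 : IsClusterGraph G2) (d : ℕ)
    (dom : Finset G1.ConnectedComponent)
    (M : G1.ConnectedComponent → G2.ConnectedComponent)
    (hinj : Set.InjOn M ↑dom)
    (hsum : Fintype.card V - d ≤ ∑ X ∈ dom, (X.supp ∩ (M X).supp).ncard) :
    ∃ D : Set V, D.ncard ≤ d ∧
      G1.induce (Dᶜ : Set V) = G2.induce (Dᶜ : Set V) := by
  set S : Set V := ⋃ X ∈ dom, X.supp ∩ (M X).supp
  refine ⟨Sᶜ, ?_, ?_⟩
  · have hcard := Set.ncard_add_ncard_compl S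
    rw [ncard_biUnion_supp_inter, Nat.card_eq_fintype_card] at hcard
    omega
  · rw [compl_compl]
    exact induce_eq_induce_of_adj_iff fun u hu v hv ↦
      h1.adj_iff_adj_of_mem_biUnion_supp_inter h2 (s := ↑dom) hinj hu hv
end
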